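/- Balls in the Gromov–Hausdorff space centered at the one-point space are not convex in the strong sense: for any r > 0 there exist compact metric spaces A, B with d_GH(Δ₁,A) ≤ r and d_GH(Δ₁,B) ≤ r, and a geodesic γ: [0,1] → 𝓜 from A to B (d_GH(γ(s),γ(t)) = |s−t|·d_GH(A,B)) such that d_GH(Δ₁, γ(1/2)) > r. -/

import Mathlib

/-!
Put `A = (r/3)·{0, 2, 4, 6}` and `B = (r/3)·{0, 6}` on the first axis of the `ℓ¹` plane and
`M = (r/3)·{-1, 1, 5, 7}` on the second. Sliding every point of `A` (resp. `B`) straight to the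
matching point of `M` changes each pairwise distance linearly, with slope at most `2r/3`, so both
slides are `r/3`-Lipschitz in the Gromov–Hausdorff metric, and running along the first and back
along the second gives a `2r/3`-Lipschitz path `γ` from `A` through `M` to `B`. On the other hand
`d_GH(A, B) ≥ 2r/3`: a map `A → B` of distortion `< 4r/3` would send the chain `A`, whose steps
are `2r/3`, into one point of the `2r`-separated space `B`. So `γ` is a geodesic. Since
`d_GH(Δ₁, X) = diam X / 2`, the endpoints (of diameter `2r`) lie in the ball of radius `r`, but
the midpoint `M` (of diameter `8r/3`) does not.
-/


open GromovHausdorff Set Metric Function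

namespace GromovHausdorff

section
variable {X Y : Type*} [MetricSpace X] [CompactSpace X] [Nonempty X]
  [MetricSpace Y] [CompactSpace Y] [Nonempty Y]

variable (X Y) in
theorem exists_abs_dist_sub_dist_le_two_mul_dist :
    ∃ F : X → Y, ∀ x x' : X,
      |dist x x' - dist (F x) (F x')| ≤ 2 * dist (toGHSpace X) (toGHSpace Y) := by
  obtain ⟨Φ, Ψ, hΦ, hΨ, hd⟩ := ghDist_eq_hausdorffDist X Y
  have hΨc : IsCompact (range Ψ) := isCompact_range hΨ.continuous
  have hfin : hausdorffEDist (range Φ) (range Ψ) ≠ ⊤ :=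
    hausdorffEDist_ne_top_of_nonempty_of_bounded (range_nonempty _) (range_nonempty _)
      (isCompact_range hΦ.continuous).isBounded hΨc.isBounded
  have hclose : ∀ x, ∃ y, dist (Φ x) (Ψ y) ≤ dist (toGHSpace X) (toGHSpace Y) := by
    intro x
    obtain ⟨_, ⟨y, rfl⟩, hy⟩ := hΨc.exists_infDist_eq_dist (range_nonempty Ψ) (Φ x)
    exact ⟨y, hy ▸ (infDist_le_hausdorffDist_of_mem (mem_range_self x) hfin).trans hd.ge⟩
  choose F hF using hclose
  refine ⟨F, fun x x' => ?_⟩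
  rw [← hΦ.dist_eq, ← hΨ.dist_eq (F x), ← Real.dist_eq]
  have := dist_dist_dist_le (Φ x) (Φ x') (Ψ (F x)) (Ψ (F x'))
  linarith [hF x, hF x']

theorem dist_toGHSpace_le_of_surjective {F : X → Y} (hF : Surjective F) {ε : ℝ}
    (h : ∀ x x', |dist x x' - dist (F x) (F x')| ≤ ε) :
    dist (toGHSpace X) (toGHSpace Y) ≤ ε / 2 := by
  have := ghDist_le_of_approx_subsets (fun x : (univ : Set X) => F x) (ε₁ := 0) (ε₃ := 0)
    (fun x => ⟨x, mem_univ x, (dist_self x).le⟩)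
    (fun y => by obtain ⟨x, rfl⟩ := hF y; exact ⟨⟨x, mem_univ x⟩, (dist_self (F x)).le⟩)
    (fun x x' => h x x')
  rwa [zero_add, add_zero] at this

variable (X) in
theorem dist_toGHSpace_punit :
    dist (toGHSpace PUnit) (toGHSpace X) = diam (univ : Set X) / 2 := by
  rw [dist_comm]
  apply le_antisymm
  · refine dist_toGHSpace_le_of_surjective (F := fun _ => PUnit.unit)
      (fun _ => ⟨Classical.arbitrary X, rfl⟩) fun x x' => ?_
    simpa using dist_le_diam_of_mem isBounded_of_compactSpace (mem_univ x) (mem_univ x')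
  · obtain ⟨F, hF⟩ := exists_abs_dist_sub_dist_le_two_mul_dist X PUnit
    have : diam (univ : Set X) ≤ 2 * dist (toGHSpace X) (toGHSpace PUnit) :=
      diam_le_of_forall_dist_le (by positivity) fun x _ x' _ => by simpa using hF x x'
    linarith

theorem min_sub_le_two_mul_dist_toGHSpace {D δ : ℝ} (hY : ∀ y y' : Y, y = y' ∨ D ≤ dist y y')
    {n : ℕ} (x : Fin (n + 1) → X) (hx : ∀ k : Fin n, dist (x k.castSucc) (x k.succ) ≤ δ) :
    min (D - δ) (dist (x 0) (x (Fin.last n))) ≤ 2 * dist (toGHSpace X) (toGHSpace Y) := by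
  obtain ⟨F, hF⟩ := exists_abs_dist_sub_dist_le_two_mul_dist X Y
  by_contra! h
  rw [lt_min_iff] at h
  have hconst : ∀ k, F (x k) = F (x 0) := by
    intro k
    induction k using Fin.induction with
    | zero => rfl
    | succ k ih =>
      refine ih ▸ ((hY _ _).resolve_right fun hD => ?_).symm
      linarith [hx k, (abs_le.1 (hF (x k.castSucc) (x k.succ))).1]
  have := (abs_le.1 (hF (x 0) (x (Fin.last n)))).2
  rw [hconst (Fin.last n), dist_self] at this
  linarith

end

theorem dist_toGHSpace_range_le {ι Z W : Type*} [Finite ι] [Nonempty ι] [MetricSpace Z]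
    [MetricSpace W] {f : ι → Z} {g : ι → W} (hf : Injective f) {ε : ℝ}
    (h : ∀ i j, |dist (f i) (f j) - dist (g i) (g j)| ≤ ε) :
    dist (toGHSpace (range f)) (toGHSpace (range g)) ≤ ε / 2 := by
  let e := Equiv.ofInjective f hf
  refine dist_toGHSpace_le_of_surjective (F := rangeFactorization g ∘ e.symm)
    (rangeFactorization_surjective.comp e.symm.surjective) fun x x' => ?_
  obtain ⟨i, rfl⟩ := e.surjective x
  obtain ⟨j, rfl⟩ := e.surjective x'
  simpa [Subtype.dist_eq, e, rangeFactorization] using h i j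

theorem dist_toGHSpace_punit_range {ι Z : Type*} [Finite ι] [Nonempty ι] [MetricSpace Z]
    (f : ι → Z) : dist (toGHSpace PUnit) (toGHSpace (range f)) = diam (range f) / 2 := by
  rw [dist_toGHSpace_punit, ← isometry_subtype_coe.diam_range, Subtype.range_coe]

end GromovHausdorff

section Path
variable {α : Type*}

theorem dist_eq_abs_sub_mul_of_dist_le [PseudoMetricSpace α] {γ : ℝ → α} {L : ℝ}
    (hγ : ∀ s ∈ Icc (0 : ℝ) 1, ∀ t ∈ Icc (0 : ℝ) 1, dist (γ s) (γ t) ≤ L * |s - t|)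
    (hL : L ≤ dist (γ 0) (γ 1)) {s t : ℝ} (hs : s ∈ Icc (0 : ℝ) 1) (ht : t ∈ Icc (0 : ℝ) 1) :
    dist (γ s) (γ t) = |s - t| * dist (γ 0) (γ 1) := by
  have h0 : (0 : ℝ) ∈ Icc (0 : ℝ) 1 := left_mem_Icc.2 zero_le_one
  have h1 : (1 : ℝ) ∈ Icc (0 : ℝ) 1 := right_mem_Icc.2 zero_le_one
  have h01 : dist (γ 0) (γ 1) = L := le_antisymm (by simpa using hγ 0 h0 1 h1) hL
  wlog hst : s ≤ t generalizing s t
  · rw [dist_comm, abs_sub_comm]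
    exact this ht hs (le_of_not_ge hst)
  have h0s : dist (γ 0) (γ s) ≤ L * s := by simpa [abs_of_nonneg hs.1] using hγ 0 h0 s hs
  have hst' := hγ s hs t ht
  have ht1 := hγ t ht 1 h1
  rw [abs_sub_comm, abs_of_nonneg (sub_nonneg.2 hst)] at hst' ⊢
  rw [abs_sub_comm, abs_of_nonneg (sub_nonneg.2 ht.2)] at ht1
  have := dist_triangle4 (γ 0) (γ s) (γ t) (γ 1)
  rw [h01] at this ⊢
  apply le_antisymm <;> linarith

noncomputable def concatReverse (P Q : ℝ → α) (s : ℝ) : α :=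
  if s ≤ 1 / 2 then P (2 * s) else Q (2 - 2 * s)

@[simp] theorem concatReverse_zero (P Q : ℝ → α) : concatReverse P Q 0 = P 0 := by
  simp [concatReverse]

@[simp] theorem concatReverse_one (P Q : ℝ → α) : concatReverse P Q 1 = Q 0 := by
  norm_num [concatReverse]

@[simp] theorem concatReverse_half (P Q : ℝ → α) : concatReverse P Q (1 / 2) = P 1 := by
  norm_num [concatReverse]

theorem dist_concatReverse_le [PseudoMetricSpace α] {P Q : ℝ → α} {L : ℝ}
    (hP : ∀ u ∈ Icc (0 : ℝ) 1, ∀ u' ∈ Icc (0 : ℝ) 1, dist (P u) (P u') ≤ L * |u - u'|)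
    (hQ : ∀ v ∈ Icc (0 : ℝ) 1, ∀ v' ∈ Icc (0 : ℝ) 1, dist (Q v) (Q v') ≤ L * |v - v'|)
    (hPQ : P 1 = Q 1) {s t : ℝ} (hs : s ∈ Icc (0 : ℝ) 1) (ht : t ∈ Icc (0 : ℝ) 1) :
    dist (concatReverse P Q s) (concatReverse P Q t) ≤ 2 * L * |s - t| := by
  wlog hst : s ≤ t generalizing s t
  · rw [dist_comm, abs_sub_comm]
    exact this ht hs (le_of_not_ge hst)
  obtain ⟨hs0, hs1⟩ := hs
  obtain ⟨ht0, ht1⟩ := ht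
  rw [abs_sub_comm, abs_of_nonneg (sub_nonneg.2 hst)]
  unfold concatReverse
  split_ifs with hs' ht' ht'
  · have := hP (2 * s) ⟨by linarith, by linarith⟩ (2 * t) ⟨by linarith, by linarith⟩
    rw [abs_sub_comm, abs_of_nonneg (by linarith)] at this
    linarith
  · have hP1 := hP (2 * s) ⟨by linarith, by linarith⟩ 1 (right_mem_Icc.2 zero_le_one)
    have hQ1 := hQ 1 (right_mem_Icc.2 zero_le_one) (2 - 2 * t) ⟨by linarith, by linarith⟩
    rw [abs_sub_comm, abs_of_nonneg (by linarith)] at hP1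
    rw [abs_of_nonneg (by linarith)] at hQ1
    have := dist_triangle (P (2 * s)) (P 1) (Q (2 - 2 * t))
    rw [hPQ] at this hP1
    linarith
  · linarith
  · have := hQ (2 - 2 * s) ⟨by linarith, by linarith⟩ (2 - 2 * t) ⟨by linarith, by linarith⟩
    rw [abs_of_nonneg (by linarith)] at this
    linarith

end Path

section AxisInterp
variable {ι : Type*} {x y : ι → ℝ} {u : ℝ}

def axisInterp (x y : ι → ℝ) (u : ℝ) (i : ι) : WithLp 1 (ℝ × ℝ) :=
  WithLp.toLp 1 ((1 - u) * x i, u * y i)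

theorem dist_axisInterp (hu : u ∈ Icc (0 : ℝ) 1) (i j : ι) :
    dist (axisInterp x y u i) (axisInterp x y u j) = (1 - u) * |x i - x j| + u * |y i - y j| := by
  rw [axisInterp, axisInterp, WithLp.prod_dist_eq_of_L1, WithLp.toLp_fst, WithLp.toLp_fst,
    WithLp.toLp_snd, WithLp.toLp_snd, Real.dist_eq, Real.dist_eq, ← mul_sub,
    ← mul_sub, abs_mul, abs_mul, abs_of_nonneg (sub_nonneg.2 hu.2), abs_of_nonneg hu.1]

theorem axisInterp_injective (hy : Injective y) (hu : 0 < u) : Injective (axisInterp x y u) :=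
  fun _ _ h => hy (mul_left_cancel₀ hu.ne' (congrArg (·.snd) h))

theorem axisInterp_one (x x' y : ι → ℝ) : axisInterp x y 1 = axisInterp x' y 1 := by
  funext i
  simp [axisInterp]

theorem dist_toGHSpace_range_axisInterp_le [Finite ι] [Nonempty ι] (hy : Injective y) {ρ : ℝ}
    (hρ : ∀ i, |x i - y i| ≤ ρ) {u u' : ℝ} (hu : u ∈ Icc (0 : ℝ) 1) (hu' : u' ∈ Icc (0 : ℝ) 1) :
    dist (toGHSpace (range (axisInterp x y u))) (toGHSpace (range (axisInterp x y u'))) ≤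
      ρ * |u - u'| := by
  wlog huu : u ≤ u' generalizing u u'
  · rw [dist_comm, abs_sub_comm]
    exact this hu' hu (le_of_not_ge huu)
  rcases huu.eq_or_lt with rfl | hlt
  · simp
  rw [dist_comm]
  have := dist_toGHSpace_range_le (axisInterp_injective (x := x) hy (hu.1.trans_lt hlt))
    (g := axisInterp x y u) (ε := |u - u'| * (2 * ρ)) fun i j => ?_
  · linarith
  rw [dist_axisInterp hu', dist_axisInterp hu,
    show (1 - u') * |x i - x j| + u' * |y i - y j| - ((1 - u) * |x i - x j| + u * |y i - y j|)
      = (u - u') * (|x i - x j| - |y i - y j|) by ring, abs_mul]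
  gcongr
  calc |(|x i - x j| - |y i - y j|)| ≤ |(x i - y i) - (x j - y j)| := by
        rw [show x i - y i - (x j - y j) = x i - x j - (y i - y j) by ring]
        exact abs_abs_sub_abs_le_abs_sub _ _
    _ ≤ |x i - y i| + |x j - y j| := abs_sub _ _
    _ ≤ 2 * ρ := by linarith [hρ i, hρ j]

theorem dist_toGHSpace_punit_range_axisInterp_zero_le [Finite ι] [Nonempty ι] {C : ℝ}
    (hC : 0 ≤ C) (hx : ∀ i j, |x i - x j| ≤ 2 * C) :
    dist (toGHSpace PUnit) (toGHSpace (range (axisInterp x y 0))) ≤ C := by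
  rw [dist_toGHSpace_punit_range]
  have : diam (range (axisInterp x y 0)) ≤ 2 * C := by
    refine diam_le_of_forall_dist_le (by positivity) ?_
    rintro _ ⟨i, rfl⟩ _ ⟨j, rfl⟩
    simpa [dist_axisInterp (left_mem_Icc.2 zero_le_one)] using hx i j
  linarith

end AxisInterp

theorem abs_smul_apply_sub_smul_apply {ι : Type*} {c : ℝ} (hc : 0 ≤ c) (x y : ι → ℝ) (i j : ι) :
    |(c • x) i - (c • y) j| = c * |x i - y j| := by
  simp [← mul_sub, abs_mul, abs_of_nonneg hc]

namespace OnePointBall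

def startPts : Fin 4 → ℝ := ![0, 2, 4, 6]
def midPts : Fin 4 → ℝ := ![-1, 1, 5, 7]
def endPts : Fin 4 → ℝ := ![0, 0, 6, 6]

variable {c : ℝ}

theorem midPts_strictMono : StrictMono midPts :=
  Fin.strictMono_iff_lt_succ.2 fun k => by fin_cases k <;> norm_num [midPts, Matrix.cons_val_two]

theorem smul_midPts_injective (hc : c ≠ 0) : Injective (c • midPts) :=
  (mul_right_injective₀ hc).comp midPts_strictMono.injective

theorem dist_start_mid_le (hc : 0 < c) {u u' : ℝ} (hu : u ∈ Icc (0 : ℝ) 1)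
    (hu' : u' ∈ Icc (0 : ℝ) 1) :
    dist (toGHSpace (range (axisInterp (c • startPts) (c • midPts) u)))
      (toGHSpace (range (axisInterp (c • startPts) (c • midPts) u'))) ≤ c * |u - u'| := by
  refine dist_toGHSpace_range_axisInterp_le (smul_midPts_injective hc.ne') (fun i => ?_) hu hu'
  rw [abs_smul_apply_sub_smul_apply hc.le]
  refine mul_le_of_le_one_right hc.le ?_
  fin_cases i <;> norm_num [startPts, midPts, Matrix.cons_val_two, Matrix.cons_val_three]

theorem dist_end_mid_le (hc : 0 < c) {v v' : ℝ} (hv : v ∈ Icc (0 : ℝ) 1)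
    (hv' : v' ∈ Icc (0 : ℝ) 1) :
    dist (toGHSpace (range (axisInterp (c • endPts) (c • midPts) v)))
      (toGHSpace (range (axisInterp (c • endPts) (c • midPts) v'))) ≤ c * |v - v'| := by
  refine dist_toGHSpace_range_axisInterp_le (smul_midPts_injective hc.ne') (fun i => ?_) hv hv'
  rw [abs_smul_apply_sub_smul_apply hc.le]
  refine mul_le_of_le_one_right hc.le ?_
  fin_cases i <;> norm_num [endPts, midPts, Matrix.cons_val_two, Matrix.cons_val_three]

theorem dist_punit_start_le (hc : 0 ≤ c) (y : Fin 4 → ℝ) :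
    dist (toGHSpace PUnit) (toGHSpace (range (axisInterp (c • startPts) y 0))) ≤ 3 * c := by
  refine dist_toGHSpace_punit_range_axisInterp_zero_le (by positivity) fun i j => ?_
  have : |startPts i - startPts j| ≤ 6 := by
    fin_cases i <;> fin_cases j <;> norm_num [startPts, Matrix.cons_val_two, Matrix.cons_val_three]
  rw [abs_smul_apply_sub_smul_apply hc]
  nlinarith

theorem dist_punit_end_le (hc : 0 ≤ c) (y : Fin 4 → ℝ) :
    dist (toGHSpace PUnit) (toGHSpace (range (axisInterp (c • endPts) y 0))) ≤ 3 * c := by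
  refine dist_toGHSpace_punit_range_axisInterp_zero_le (by positivity) fun i j => ?_
  have : |endPts i - endPts j| ≤ 6 := by
    fin_cases i <;> fin_cases j <;> norm_num [endPts, Matrix.cons_val_two, Matrix.cons_val_three]
  rw [abs_smul_apply_sub_smul_apply hc]
  nlinarith

theorem three_mul_lt_dist_punit_mid (hc : 0 < c) (x : Fin 4 → ℝ) :
    3 * c < dist (toGHSpace PUnit) (toGHSpace (range (axisInterp x (c • midPts) 1))) := by
  rw [dist_toGHSpace_punit_range]
  have h := dist_le_diam_of_mem (finite_range (axisInterp x (c • midPts) 1)).isBounded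
    (mem_range_self 0) (mem_range_self 3)
  rw [dist_axisInterp (right_mem_Icc.2 zero_le_one), abs_smul_apply_sub_smul_apply hc.le] at h
  have h03 : |midPts 0 - midPts 3| = 8 := by norm_num [midPts, Matrix.cons_val_three]
  rw [h03] at h
  linarith

theorem two_mul_le_dist_start_end (hc : 0 < c) (y y' : Fin 4 → ℝ) :
    2 * c ≤ dist (toGHSpace (range (axisInterp (c • startPts) y 0)))
      (toGHSpace (range (axisInterp (c • endPts) y' 0))) := by
  have hdist : ∀ (x z : Fin 4 → ℝ) (i j : Fin 4),
      dist (axisInterp (c • x) z 0 i) (axisInterp (c • x) z 0 j) = c * |x i - x j| := by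
    intro x z i j
    rw [dist_axisInterp (left_mem_Icc.2 zero_le_one), abs_smul_apply_sub_smul_apply hc.le]
    ring
  have hsep : ∀ b b' : range (axisInterp (c • endPts) y' 0), b = b' ∨ 6 * c ≤ dist b b' := by
    rintro ⟨_, i, rfl⟩ ⟨_, j, rfl⟩
    rw [Subtype.dist_eq, hdist]
    have : endPts i = endPts j ∨ 6 ≤ |endPts i - endPts j| := by
      fin_cases i <;> fin_cases j <;> norm_num [endPts, Matrix.cons_val_two, Matrix.cons_val_three]
    refine this.imp (fun h => Subtype.ext ?_) (fun h => by nlinarith)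
    simp [axisInterp, h]
  let a := rangeFactorization (axisInterp (c • startPts) y 0)
  have ha : ∀ i j, dist (a i) (a j) = c * |startPts i - startPts j| := fun i j => hdist _ _ i j
  have hchain : ∀ k : Fin 3, dist (a k.castSucc) (a k.succ) ≤ 2 * c := by
    intro k
    have : |startPts k.castSucc - startPts k.succ| ≤ 2 := by
      fin_cases k <;> norm_num [startPts, Matrix.cons_val_two, Matrix.cons_val_three]
    rw [ha]
    nlinarith
  have := min_sub_le_two_mul_dist_toGHSpace hsep a hchain
  have hends : |startPts 0 - startPts (Fin.last 3)| = 6 := by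
    norm_num [startPts, Fin.last, Matrix.cons_val_three]
  rw [ha, hends, min_eq_left (by linarith)] at this
  linarith

end OnePointBall

open OnePointBall

/-- Balls centered at the one-point space are not convex in the strong sense: there are
two compact spaces in the ball of radius `r` joined by a geodesic leaving the ball. -/
theorem ball_at_onePoint_not_strongly_convex (r : ℝ) (hr : 0 < r) :
    ∃ A B : GromovHausdorff.GHSpace,
      dist (GromovHausdorff.toGHSpace PUnit) A ≤ r ∧
      dist (GromovHausdorff.toGHSpace PUnit) B ≤ r ∧
      ∃ γ : ℝ → GromovHausdorff.GHSpace, γ 0 = A ∧ γ 1 = B ∧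
        (∀ s ∈ Icc (0 : ℝ) 1, ∀ t ∈ Icc (0 : ℝ) 1,
          dist (γ s) (γ t) = |s - t| * dist A B) ∧
        r < dist (GromovHausdorff.toGHSpace PUnit) (γ (1 / 2)) := by
  obtain ⟨c, hc, rfl⟩ : ∃ c : ℝ, 0 < c ∧ r = 3 * c := ⟨r / 3, by positivity, by ring⟩
  let P u := toGHSpace (range (axisInterp (c • startPts) (c • midPts) u))
  let Q v := toGHSpace (range (axisInterp (c • endPts) (c • midPts) v))
  have hPQ : P 1 = Q 1 := congrArg (fun f => toGHSpace (range f)) (axisInterp_one _ _ _)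
  have hγ := fun s hs t ht => dist_concatReverse_le (s := s) (t := t)
    (fun u hu u' hu' => dist_start_mid_le hc hu hu') (fun v hv v' hv' => dist_end_mid_le hc hv hv')
    hPQ hs ht
  have hAB : 2 * c ≤ dist (concatReverse P Q 0) (concatReverse P Q 1) := by
    simpa using two_mul_le_dist_start_end hc _ _
  refine ⟨P 0, Q 0, dist_punit_start_le hc.le _, dist_punit_end_le hc.le _, concatReverse P Q,
    concatReverse_zero P Q, concatReverse_one P Q, fun s hs t ht => ?_, ?_⟩
  · simpa using dist_eq_abs_sub_mul_of_dist_le hγ hAB hs ht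
  · rw [concatReverse_half]
    exact three_mul_lt_dist_punit_mid hc _
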